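/- Let X be a Banach lattice with order continuous norm. If every sequence x_n with |x_n| weakly converging to 0 and |x_n| ∧ u →o 0 for all u ≥ 0 satisfies ‖x_n‖ → 0, then X is a KB-space. -/

import Mathlib

set_option linter.unusedSectionVars false
set_option maxHeartbeats 1000000

open Filter Set

section ODual

variable (E : Type*) [AddCommGroup E] [Preorder E] [Module ℝ E]

/-- The order (bounded) dual: linear functionals bounded on order intervals. -/
noncomputable def obDual : Submodule ℝ (E →ₗ[ℝ] ℝ) where
  carrier := {f | ∀ w : E, ∃ M : ℝ, ∀ x : E, -w ≤ x → x ≤ w → |f x| ≤ M}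
  zero_mem' := fun w => ⟨0, fun x _ _ => by simp⟩
  add_mem' := fun {f g} hf hg w => by
    obtain ⟨M, hM⟩ := hf w
    obtain ⟨N, hN⟩ := hg w
    refine ⟨M + N, fun x h1 h2 => ?_⟩
    calc |(f + g) x| = |f x + g x| := by simp
    _ ≤ |f x| + |g x| := abs_add_le _ _
    _ ≤ M + N := add_le_add (hM x h1 h2) (hN x h1 h2)
  smul_mem' := fun c f hf => by
    intro w
    obtain ⟨M, hM⟩ := hf w
    refine ⟨|c| * M, fun x h1 h2 => ?_⟩
    calc |(c • f) x| = |c| * |f x| := by simp [abs_mul]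
    _ ≤ |c| * M := mul_le_mul_of_nonneg_left (hM x h1 h2) (abs_nonneg c)

/-- The pointwise-on-positive-elements (pre)order on a space of functionals. -/
instance instSubPre (Y : Submodule ℝ (E →ₗ[ℝ] ℝ)) : Preorder Y where
  le f g := ∀ x : E, 0 ≤ x → (f : E →ₗ[ℝ] ℝ) x ≤ (g : E →ₗ[ℝ] ℝ) x
  le_refl f x _ := le_rfl
  le_trans f g h h1 h2 x hx := (h1 x hx).trans (h2 x hx)

variable {E}

theorem subPre_le_iff {Y : Submodule ℝ (E →ₗ[ℝ] ℝ)} {f g : Y} :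
    f ≤ g ↔ ∀ x : E, 0 ≤ x → (f : E →ₗ[ℝ] ℝ) x ≤ (g : E →ₗ[ℝ] ℝ) x := Iff.rfl

/-- Order convergence of a net to a limit (sandwich form: eventually
`l - d ≤ x_α ≤ l + d` for every `d` in a set directed downward to `0`). -/
def OConvTo {ι : Type*} [Preorder ι] (x : ι → E) (l : E) : Prop :=
  ∃ D : Set E, D.Nonempty ∧ DirectedOn (· ≥ ·) D ∧ IsGLB D 0 ∧
    ∀ d ∈ D, ∃ α₀ : ι, ∀ α, α₀ ≤ α → l - d ≤ x α ∧ x α ≤ l + d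

/-- Order continuity of a linear functional: `f(x_α) → 0` whenever `x_α ↓ 0`. -/
def OrdContE (f : E →ₗ[ℝ] ℝ) : Prop :=
  ∀ D : Set E, D.Nonempty → DirectedOn (· ≥ ·) D → IsGLB D 0 →
    ∀ ε : ℝ, 0 < ε → ∃ d ∈ D, ∀ e ∈ D, e ≤ d → |f e| < ε

end ODual

section VL

variable (X : Type*) [Lattice X] [AddCommGroup X]
  [CovariantClass X X (· + ·) (· ≤ ·)] [Module ℝ X] [PosSMulMono ℝ X]

variable {X} in
/-- Unbounded order convergence: `|x_α - l| ⊓ u →o 0` for every `u ≥ 0`. -/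
def uoConvTo {ι : Type*} [Preorder ι] (x : ι → X) (l : X) : Prop :=
  ∀ u : X, 0 ≤ u → OConvTo (fun α => |x α - l| ⊓ u) (0 : X)

/-- The canonical evaluation of `x ∈ X` on a space `Y` of functionals on `X`. -/
def hatFun (Y : Submodule ℝ (X →ₗ[ℝ] ℝ)) (x : X) : Y →ₗ[ℝ] ℝ where
  toFun f := (f : X →ₗ[ℝ] ℝ) x
  map_add' f g := by simp
  map_smul' c f := by simp

theorem hatFun_mem (Y : Submodule ℝ (X →ₗ[ℝ] ℝ)) (x : X) :
    hatFun X Y x ∈ obDual Y := by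
  intro w
  refine ⟨(w : X →ₗ[ℝ] ℝ) (x⁺) + (w : X →ₗ[ℝ] ℝ) (x⁻), fun f h1 h2 => ?_⟩
  have hp : (0 : X) ≤ x⁺ := posPart_nonneg x
  have hn : (0 : X) ≤ x⁻ := negPart_nonneg x
  have e1 := (subPre_le_iff.mp h1) _ hp
  have e2 := (subPre_le_iff.mp h2) _ hp
  have e3 := (subPre_le_iff.mp h1) _ hn
  have e4 := (subPre_le_iff.mp h2) _ hn
  have c1 : -((w : X →ₗ[ℝ] ℝ) (x⁺)) ≤ (f : X →ₗ[ℝ] ℝ) (x⁺) := by simpa using e1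
  have c3 : -((w : X →ₗ[ℝ] ℝ) (x⁻)) ≤ (f : X →ₗ[ℝ] ℝ) (x⁻) := by simpa using e3
  have key : (f : X →ₗ[ℝ] ℝ) x
      = (f : X →ₗ[ℝ] ℝ) (x⁺) - (f : X →ₗ[ℝ] ℝ) (x⁻) := by
    rw [← map_sub, posPart_sub_negPart]
  show |(f : X →ₗ[ℝ] ℝ) x| ≤ _
  rw [key]
  have a1 : |(f : X →ₗ[ℝ] ℝ) (x⁺)| ≤ (w : X →ₗ[ℝ] ℝ) (x⁺) := abs_le.mpr ⟨c1, e2⟩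
  have a2 : |(f : X →ₗ[ℝ] ℝ) (x⁻)| ≤ (w : X →ₗ[ℝ] ℝ) (x⁻) := abs_le.mpr ⟨c3, e4⟩
  have := abs_sub ((f : X →ₗ[ℝ] ℝ) (x⁺)) ((f : X →ₗ[ℝ] ℝ) (x⁻))
  linarith

/-- The canonical embedding of `X` into the order dual of `Y ⊆ X~`. -/
def hatEl (Y : Submodule ℝ (X →ₗ[ℝ] ℝ)) (x : X) : obDual Y :=
  ⟨hatFun X Y x, hatFun_mem X Y x⟩

/-- The pointwise order on `X~~` (the instance `instSubPre`, supplied explicitly since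
instance search no longer finds it here). -/
noncomputable instance instBidualPre : Preorder ↥(obDual ↥(obDual X)) :=
  @instSubPre (↥(obDual X)) _ _ _ (obDual ↥(obDual X))

/-- `X~` separates the points of `X`. -/
def SepPoints : Prop := ∀ x : X, x ≠ 0 → ∃ f : obDual X, (f : X →ₗ[ℝ] ℝ) x ≠ 0

/-- The canonical image of `X` in `X~~` is a regular sublattice:
`x_α ↓ 0` in `X` implies `x̂_α ↓ 0` in `X~~`. -/
def HatRegular : Prop :=
  ∀ D : Set X, D.Nonempty → DirectedOn (· ≥ ·) D → IsGLB D 0 →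
    IsGLB (hatEl X (obDual X) '' D) (0 : obDual ↥(obDual X))

variable {X} in
/-- The net `x̂_α` is eventually order bounded in `X~~`. -/
def HatEvOB {ι : Type*} [Preorder ι] (x : ι → X) : Prop :=
  ∃ (b t : obDual ↥(obDual X)) (α₀ : ι), ∀ α, α₀ ≤ α →
    b ≤ hatEl X (obDual X) (x α) ∧ hatEl X (obDual X) (x α) ≤ t

variable {X} in
/-- Bidual bounded uo-convergence. -/
def bbuoConvTo {ι : Type*} [Preorder ι] (x : ι → X) (l : X) : Prop :=
  uoConvTo x l ∧ HatEvOB x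

/-- `X` has the `b`-property: every subset of `X` whose canonical image is
order bounded in `X~~` is order bounded in `X`. -/
def HasBProp : Prop :=
  ∀ A : Set X,
    (∃ b t : obDual ↥(obDual X), ∀ a ∈ A,
        b ≤ hatEl X (obDual X) a ∧ hatEl X (obDual X) a ≤ t) →
    ∃ b t : X, ∀ a ∈ A, b ≤ a ∧ a ≤ t

/-- The Archimedean property for a lattice-ordered group. -/
def IsArch : Prop := ∀ x y : X, 0 ≤ x → (∀ n : ℕ, n • x ≤ y) → x = 0

end VL


section Banach

variable (X : Type u) [NormedAddCommGroup X] [Lattice X] [HasSolidNorm X]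
  [IsOrderedAddMonoid X] [NormedSpace ℝ X]

/-- The norm of `X` is order continuous: `x_α ↓ 0` implies `‖x_α‖ → 0`. -/
def OrderContNorm : Prop :=
  ∀ D : Set X, D.Nonempty → DirectedOn (· ≥ ·) D → IsGLB D 0 →
    ∀ ε : ℝ, 0 < ε → ∃ d ∈ D, ∀ e ∈ D, e ≤ d → ‖e‖ < ε

/-- `X` is a KB-space: every norm bounded increasing net in `X₊` is norm
convergent. -/
def IsKB : Prop :=
  ∀ D : Set X, D.Nonempty → DirectedOn (· ≤ ·) D → (∀ d ∈ D, 0 ≤ d) →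
    (∃ M : ℝ, ∀ d ∈ D, ‖d‖ ≤ M) →
    ∃ x : X, ∀ ε : ℝ, 0 < ε → ∃ d ∈ D, ∀ e ∈ D, d ≤ e → ‖e - x‖ < ε

end Banach

/-!
If the increasing norm bounded net is norm Cauchy, completeness gives its limit. Otherwise it
contains an increasing sequence `a n` whose increments `x n = a (n + 1) - a n` stay `ε` away from
`0` in norm, while their partial sums `a n - a 0` stay norm bounded. Bounded partial sums make
`∑ g⁺ (x n)` finite for every `g ∈ X*`, so `x n` is weakly null, and, by order continuity, force
the tail suprema of `x n ⊓ u` to decrease to `0`, so `x n` is uo-null. The hypothesis then gives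
`‖x n‖ → 0`, a contradiction.
-/


section NormedLattice

variable {X : Type*} [NormedAddCommGroup X] [Lattice X] [HasSolidNorm X] [IsOrderedAddMonoid X]

lemma norm_le_norm_of_nonneg_of_le {a b : X} (ha : 0 ≤ a) (hab : a ≤ b) : ‖a‖ ≤ ‖b‖ :=
  norm_le_norm_of_abs_le_abs (by rwa [abs_of_nonneg ha, abs_of_nonneg (ha.trans hab)])

variable [NormedSpace ℝ X]

lemma eq_zero_of_forall_norm_nsmul_le {v : X} {C : ℝ} (h : ∀ k : ℕ, ‖k • v‖ ≤ C) : v = 0 := by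
  by_contra hv
  have hpos : 0 < ‖v‖ := norm_pos_iff.mpr hv
  obtain ⟨k, hk⟩ := exists_nat_gt (C / ‖v‖)
  have hkv := h k
  rw [RCLike.norm_nsmul ℝ, nsmul_eq_mul] at hkv
  rw [div_lt_iff₀ hpos] at hk
  linarith

/-- Lowering an upper bound of `a` by `c⁺` keeps it an upper bound, so `k • c⁺ ≤ b - a 0` for
every `k`. -/
lemma nonpos_of_forall_le_sub {a : ℕ → X} {b : X} (hb : b ∈ upperBounds (range a)) {c : X}
    (hc : ∀ y ∈ upperBounds (range a), ∀ n, c ≤ y - a n) : c ≤ 0 := by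
  have hlower : ∀ k : ℕ, b - k • c⁺ ∈ upperBounds (range a) := by
    intro k
    induction k with
    | zero => simpa using hb
    | succ k ih =>
      rintro _ ⟨n, rfl⟩
      have hcn : a n + c ≤ b - k • c⁺ := by
        have := hc _ ih n
        rwa [le_sub_iff_add_le, add_comm] at this
      have hn : a n + c⁺ ≤ b - k • c⁺ := by
        rw [posPart_def, add_sup, add_zero]
        exact sup_le hcn (ih ⟨n, rfl⟩)
      rw [succ_nsmul, ← sub_sub]
      exact le_sub_iff_add_le.mpr hn
  have hbound : ∀ k : ℕ, ‖k • c⁺‖ ≤ ‖b - a 0‖ := fun k =>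
    norm_le_norm_of_nonneg_of_le (nsmul_nonneg (posPart_nonneg c) k)
      (le_sub_comm.mp (hlower k ⟨0, rfl⟩))
  exact posPart_eq_zero.mp (eq_zero_of_forall_norm_nsmul_le hbound)

/-- Gluing `r` consecutive blocks gives `r • v ≤ ∑ k < m, x k + E` with `‖E‖ ≤ r δ`. -/
lemma eq_zero_of_forall_le_sum_Ico_add {x : ℕ → X} {C : ℝ}
    (hC : ∀ n, ‖∑ k ∈ Finset.range n, x k‖ ≤ C) {v : X} (hv : 0 ≤ v)
    (hblock : ∀ δ > 0, ∀ N, ∃ K, ∃ e, 0 ≤ e ∧ ‖e‖ ≤ δ ∧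
      v ≤ ∑ k ∈ Finset.Ico N (N + K), x k + e) :
    v = 0 := by
  have hglue : ∀ δ > 0, ∀ r : ℕ, ∃ m, ∃ E, 0 ≤ E ∧ ‖E‖ ≤ r * δ ∧
      r • v ≤ ∑ k ∈ Finset.range m, x k + E := by
    intro δ hδ r
    induction r with
    | zero => exact ⟨0, 0, le_rfl, by simp, by simp⟩
    | succ r ih =>
      obtain ⟨m, E, hE, hEδ, hrv⟩ := ih
      obtain ⟨K, e, he, heδ, hve⟩ := hblock δ hδ m
      refine ⟨m + K, E + e, add_nonneg hE he, ?_, ?_⟩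
      · calc ‖E + e‖ ≤ ‖E‖ + ‖e‖ := norm_add_le E e
          _ ≤ (r + 1 : ℕ) * δ := by push_cast; linarith
      · calc (r + 1) • v = r • v + v := succ_nsmul v r
          _ ≤ (∑ k ∈ Finset.range m, x k + E) + (∑ k ∈ Finset.Ico m (m + K), x k + e) :=
            add_le_add hrv hve
          _ = ∑ k ∈ Finset.range (m + K), x k + (E + e) := by
            rw [← Finset.sum_range_add_sum_Ico x (Nat.le_add_right m K)]; abel
  refine eq_zero_of_forall_norm_nsmul_le (C := C + 1) fun k => ?_
  obtain ⟨m, E, hE, hEδ, hkv⟩ := hglue (1 / (k + 1)) (by positivity) k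
  have hEle : ‖E‖ ≤ 1 := hEδ.trans <| by
    rw [mul_one_div, div_le_one (by positivity)]; linarith
  calc ‖k • v‖ ≤ ‖∑ k ∈ Finset.range m, x k + E‖ :=
        norm_le_norm_of_nonneg_of_le (nsmul_nonneg hv k) hkv
    _ ≤ ‖∑ k ∈ Finset.range m, x k‖ + ‖E‖ := norm_add_le _ _
    _ ≤ C + 1 := add_le_add (hC m) hEle

lemma partialSups_le_sum_range {y : ℕ → X} (hy : ∀ n, 0 ≤ y n) (n : ℕ) :
    partialSups y n ≤ ∑ k ∈ Finset.range (n + 1), y k :=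
  partialSups_le y n _ fun _ hj =>
    Finset.single_le_sum (fun k _ => hy k) (Finset.mem_range.mpr (Nat.lt_succ_of_le hj))

lemma exists_le_sum_range_add_of_tendsto_partialSups {y : ℕ → X} (hy : ∀ n, 0 ≤ y n) {z : X}
    (hz : z ∈ upperBounds (range y)) (hlim : Tendsto (partialSups y) atTop (nhds z))
    {δ : ℝ} (hδ : 0 < δ) :
    ∃ K, ∃ e, 0 ≤ e ∧ ‖e‖ ≤ δ ∧ z ≤ ∑ k ∈ Finset.range K, y k + e := by
  obtain ⟨K, hK⟩ := Metric.tendsto_atTop.mp hlim δ hδ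
  have hle : partialSups y K ≤ z := partialSups_le _ _ _ fun j _ => hz ⟨j, rfl⟩
  refine ⟨K + 1, z - partialSups y K, sub_nonneg.mpr hle, ?_, ?_⟩
  · rw [← dist_eq_norm, dist_comm]
    exact (hK K le_rfl).le
  · calc z = partialSups y K + (z - partialSups y K) := (add_sub_cancel _ _).symm
      _ ≤ ∑ k ∈ Finset.range (K + 1), y k + (z - partialSups y K) :=
        add_le_add_left (partialSups_le_sum_range hy K) _

end NormedLattice

namespace OrderContNorm

variable {X : Type*} [NormedAddCommGroup X] [Lattice X] [HasSolidNorm X] [IsOrderedAddMonoid X]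
  [NormedSpace ℝ X] [CompleteSpace X]

/-- Order continuity applied to `{y - a n | y upper bound of a}`, which decreases to `0`. -/
theorem exists_isLUB_tendsto (hocn : OrderContNorm X) {a : ℕ → X} (ha : Monotone a)
    (hbdd : BddAbove (range a)) : ∃ s, IsLUB (range a) s ∧ Tendsto a atTop (nhds s) := by
  set D := image2 (fun y n => y - a n) (upperBounds (range a)) univ
  obtain ⟨b, hb⟩ := hbdd
  have hne : D.Nonempty := ⟨b - a 0, mem_image2_of_mem hb (mem_univ 0)⟩
  have hdir : DirectedOn (· ≥ ·) D := by
    rintro _ ⟨y₁, hy₁, n₁, -, rfl⟩ _ ⟨y₂, hy₂, n₂, -, rfl⟩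
    refine ⟨(y₁ ⊓ y₂) - a (max n₁ n₂),
      mem_image2_of_mem (fun _ hx => le_inf (hy₁ hx) (hy₂ hx)) (mem_univ _), ?_, ?_⟩
    · exact sub_le_sub inf_le_left (ha (le_max_left _ _))
    · exact sub_le_sub inf_le_right (ha (le_max_right _ _))
  have hglb : IsGLB D 0 := by
    refine ⟨?_, fun c hc => nonpos_of_forall_le_sub hb fun y hy n =>
      hc (mem_image2_of_mem hy (mem_univ n))⟩
    rintro _ ⟨y, hy, n, -, rfl⟩
    exact sub_nonneg.mpr (hy ⟨n, rfl⟩)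
  have hcauchy : CauchySeq a := by
    rw [Metric.cauchySeq_iff']
    intro ε hε
    obtain ⟨_, ⟨y, hy, n₀, -, rfl⟩, hd⟩ := hocn D hne hdir hglb (ε / 2) (half_pos hε)
    refine ⟨n₀, fun m hm => ?_⟩
    have hm' : ‖y - a m‖ < ε / 2 :=
      hd _ (mem_image2_of_mem hy (mem_univ m)) (sub_le_sub_left (ha hm) y)
    have hn' : ‖y - a n₀‖ < ε / 2 := hd _ (mem_image2_of_mem hy (mem_univ n₀)) le_rfl
    calc dist (a m) (a n₀) = ‖(y - a n₀) - (y - a m)‖ := by rw [dist_eq_norm]; abel_nf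
      _ ≤ ‖y - a n₀‖ + ‖y - a m‖ := norm_sub_le _ _
      _ < ε := by linarith
  obtain ⟨s, hs⟩ := cauchySeq_tendsto_of_complete hcauchy
  exact ⟨s, isLUB_of_tendsto_atTop ha hs, hs⟩

theorem exists_isLUB_tendsto_partialSups (hocn : OrderContNorm X) {y : ℕ → X}
    (hbdd : BddAbove (range y)) :
    ∃ s, IsLUB (range y) s ∧ Tendsto (partialSups y) atTop (nhds s) := by
  obtain ⟨s, hs, hlim⟩ :=
    hocn.exists_isLUB_tendsto (partialSups y).monotone (bddAbove_range_partialSups.mpr hbdd)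
  exact ⟨s, by simpa only [IsLUB, upperBounds_range_partialSups] using hs, hlim⟩

/-- The tail suprema `z N = sup_{k ≥ N} (x k ⊓ u)` exist by order continuity and decrease to `0`
because the partial sums of `x` are norm bounded. -/
theorem oConvTo_inf_zero (hocn : OrderContNorm X) {x : ℕ → X} (hx : ∀ n, 0 ≤ x n) {C : ℝ}
    (hC : ∀ n, ‖∑ k ∈ Finset.range n, x k‖ ≤ C) {u : X} (hu : 0 ≤ u) :
    OConvTo (fun n => x n ⊓ u) 0 := by
  set y := fun n => x n ⊓ u
  have hy : ∀ n, 0 ≤ y n := fun n => le_inf (hx n) hu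
  choose z hz hlim using fun N =>
    hocn.exists_isLUB_tendsto_partialSups (y := fun k => y (N + k))
      ⟨u, by rintro _ ⟨k, rfl⟩; exact inf_le_right⟩
  have hyz : ∀ N n, N ≤ n → y n ≤ z N := fun N n hn =>
    (hz N).1 ⟨n - N, by simp only [Nat.add_sub_cancel' hn]⟩
  have hz0 : ∀ N, 0 ≤ z N := fun N => (hy N).trans (hyz N N le_rfl)
  have hanti : Antitone z := antitone_nat_of_succ_le fun N =>
    (hz (N + 1)).mono (hz N) <| by
      rintro _ ⟨k, rfl⟩
      exact ⟨k + 1, by simp only [add_assoc, add_comm 1]⟩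
  have hblock : ∀ N, ∀ δ > 0, ∃ K, ∃ e, 0 ≤ e ∧ ‖e‖ ≤ δ ∧
      z N ≤ ∑ k ∈ Finset.Ico N (N + K), x k + e := by
    intro N δ hδ
    obtain ⟨K, e, he, heδ, hzK⟩ :=
      exists_le_sum_range_add_of_tendsto_partialSups (fun k => hy (N + k)) (hz N).1 (hlim N) hδ
    refine ⟨K, e, he, heδ, hzK.trans ?_⟩
    rw [Finset.sum_Ico_eq_sum_range, Nat.add_sub_cancel_left]
    exact add_le_add_left (Finset.sum_le_sum fun k _ => inf_le_left) e
  refine ⟨range z, range_nonempty z, directedOn_range.mpr hanti.directed_ge,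
    ⟨?_, fun c hc => ?_⟩, ?_⟩
  · rintro _ ⟨N, rfl⟩
    exact hz0 N
  · have hc' : ∀ N, c⁺ ≤ z N := fun N => sup_le (hc ⟨N, rfl⟩) (hz0 N)
    refine posPart_eq_zero.mp (eq_zero_of_forall_le_sum_Ico_add hC (posPart_nonneg c)
      fun δ hδ N => ?_)
    obtain ⟨K, e, he, heδ, hzN⟩ := hblock N δ hδ
    exact ⟨K, e, he, heδ, (hc' N).trans hzN⟩
  · rintro _ ⟨N, rfl⟩
    refine ⟨N, fun n hn => ⟨?_, ?_⟩⟩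
    · rw [zero_sub]; exact (neg_nonpos.mpr (hz0 N)).trans (hy n)
    · rw [zero_add]; exact hyz N n hn

end OrderContNorm

section WeakNull

variable {X : Type*} [NormedAddCommGroup X] [Lattice X] [HasSolidNorm X] [IsOrderedAddMonoid X]
  [NormedSpace ℝ X]

/-- The Riesz–Kantorovich formula for `g⁺ v` (meaningful for `0 ≤ v`). -/
noncomputable def posPartApply (g : X →L[ℝ] ℝ) (v : X) : ℝ := sSup (g '' Icc 0 v)

variable {g : X →L[ℝ] ℝ} {v w : X}

lemma image_Icc_nonempty (hv : 0 ≤ v) : (g '' Icc 0 v).Nonempty :=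
  (nonempty_Icc.mpr hv).image g

lemma apply_le_mul_norm_of_mem_Icc {s : X} (hs : s ∈ Icc 0 v) : g s ≤ ‖g‖ * ‖v‖ :=
  calc g s ≤ ‖g s‖ := Real.le_norm_self _
    _ ≤ ‖g‖ * ‖s‖ := g.le_opNorm s
    _ ≤ ‖g‖ * ‖v‖ := by gcongr; exact norm_le_norm_of_nonneg_of_le hs.1 hs.2

lemma bddAbove_image_Icc : BddAbove (g '' Icc 0 v) :=
  ⟨‖g‖ * ‖v‖, by rintro _ ⟨s, hs, rfl⟩; exact apply_le_mul_norm_of_mem_Icc hs⟩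

lemma apply_le_posPartApply (hv : 0 ≤ v) : g v ≤ posPartApply g v :=
  le_csSup bddAbove_image_Icc ⟨v, ⟨hv, le_rfl⟩, rfl⟩

lemma posPartApply_nonneg (hv : 0 ≤ v) : 0 ≤ posPartApply g v :=
  le_csSup_of_le bddAbove_image_Icc ⟨0, ⟨le_rfl, hv⟩, rfl⟩ (map_zero g).ge

lemma posPartApply_le (hv : 0 ≤ v) : posPartApply g v ≤ ‖g‖ * ‖v‖ :=
  csSup_le (image_Icc_nonempty hv) fun _ ⟨_, hs, hgs⟩ => hgs ▸ apply_le_mul_norm_of_mem_Icc hs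

lemma posPartApply_add_le (hv : 0 ≤ v) (hw : 0 ≤ w) :
    posPartApply g v + posPartApply g w ≤ posPartApply g (v + w) := by
  rw [← le_sub_iff_add_le]
  refine csSup_le (image_Icc_nonempty hv) ?_
  rintro _ ⟨s, ⟨hs0, hsv⟩, rfl⟩
  rw [le_sub_iff_add_le, add_comm, ← le_sub_iff_add_le]
  refine csSup_le (image_Icc_nonempty hw) ?_
  rintro _ ⟨t, ⟨ht0, htw⟩, rfl⟩
  rw [le_sub_iff_add_le, ← map_add]
  exact le_csSup bddAbove_image_Icc
    ⟨t + s, ⟨add_nonneg ht0 hs0, by rw [add_comm v]; gcongr⟩, rfl⟩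

lemma sum_posPartApply_le {x : ℕ → X} (hx : ∀ n, 0 ≤ x n) (n : ℕ) :
    ∑ k ∈ Finset.range n, posPartApply g (x k) ≤
      posPartApply g (∑ k ∈ Finset.range n, x k) := by
  induction n with
  | zero => simpa using posPartApply_nonneg le_rfl
  | succ n ih =>
    rw [Finset.sum_range_succ, Finset.sum_range_succ]
    exact (add_le_add_left ih _).trans
      (posPartApply_add_le (Finset.sum_nonneg fun k _ => hx k) (hx n))

/-- `g⁺ (x n)` and `(-g)⁺ (x n)` are summable since `∑ g⁺ (x k) ≤ g⁺ (∑ x k) ≤ ‖g‖ C`. -/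
theorem tendsto_apply_zero_of_norm_sum_le {x : ℕ → X} (hx : ∀ n, 0 ≤ x n) {C : ℝ}
    (hC : ∀ n, ‖∑ k ∈ Finset.range n, x k‖ ≤ C) (g : X →L[ℝ] ℝ) :
    Tendsto (fun n => g (x n)) atTop (nhds 0) := by
  have hpos : ∀ f : X →L[ℝ] ℝ, Tendsto (fun n => posPartApply f (x n)) atTop (nhds 0) := by
    intro f
    refine (summable_of_sum_range_le (c := ‖f‖ * C) (fun n => posPartApply_nonneg (hx n))
      fun n => ?_).tendsto_atTop_zero
    exact (sum_posPartApply_le hx n).trans <|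
      (posPartApply_le (Finset.sum_nonneg fun k _ => hx k)).trans
        (mul_le_mul_of_nonneg_left (hC n) (norm_nonneg f))
  refine tendsto_of_tendsto_of_tendsto_of_le_of_le (by simpa using (hpos (-g)).neg) (hpos g)
    (fun n => ?_) fun n => apply_le_posPartApply (hx n)
  have hneg := apply_le_posPartApply (g := -g) (hx n)
  rw [neg_apply] at hneg
  linarith

end WeakNull

section DirectedSet

variable {E : Type*} [SeminormedAddCommGroup E] [Preorder E] {D : Set E}

theorem exists_tendsto_of_directedOn [CompleteSpace E] (hne : D.Nonempty)
    (hdir : DirectedOn (· ≤ ·) D) (hD : ∀ ε > 0, ∃ d ∈ D, ∀ e ∈ D, d ≤ e → ‖e - d‖ < ε) :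
    ∃ x, ∀ ε > 0, ∃ d ∈ D, ∀ e ∈ D, d ≤ e → ‖e - x‖ < ε := by
  have := hdir.isDirectedOrder
  have := hne.to_subtype
  have hcauchy : CauchySeq (Subtype.val : D → E) := by
    refine Metric.cauchy_iff.mpr ⟨inferInstance, fun ε hε => ?_⟩
    obtain ⟨d, hd, hdε⟩ := hD (ε / 2) (half_pos hε)
    refine ⟨Subtype.val '' Ici ⟨d, hd⟩, image_mem_map (Ici_mem_atTop _), ?_⟩
    rintro _ ⟨⟨e, he⟩, hde, rfl⟩ _ ⟨⟨e', he'⟩, hde', rfl⟩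
    calc dist e e' ≤ dist e d + dist e' d := dist_triangle_right e e' d
      _ < ε := by rw [dist_eq_norm, dist_eq_norm]; linarith [hdε e he hde, hdε e' he' hde']
  obtain ⟨x, hx⟩ := cauchySeq_tendsto_of_complete hcauchy
  refine ⟨x, fun ε hε => ?_⟩
  obtain ⟨⟨d, hd⟩, -, hdx⟩ := (atTop_basis.tendsto_iff Metric.nhds_basis_ball).mp hx ε hε
  exact ⟨d, hd, fun e he hde => by simpa [dist_eq_norm] using hdx ⟨e, he⟩ hde⟩

theorem exists_monotone_le_norm_sub (hne : D.Nonempty) {ε : ℝ}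
    (hD : ∀ d ∈ D, ∃ e ∈ D, d ≤ e ∧ ε ≤ ‖e - d‖) :
    ∃ a : ℕ → E, Monotone a ∧ (∀ n, a n ∈ D) ∧ ∀ n, ε ≤ ‖a (n + 1) - a n‖ := by
  choose! next hnext hle hgap using hD
  obtain ⟨d, hd⟩ := hne
  have hmem : ∀ n, next^[n] d ∈ D := fun n => by
    induction n with
    | zero => exact hd
    | succ n ih => rw [Function.iterate_succ_apply']; exact hnext _ ih
  refine ⟨fun n => next^[n] d, monotone_nat_of_le_succ fun n => ?_, hmem, fun n => ?_⟩
  · rw [Function.iterate_succ_apply']; exact hle _ (hmem n)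
  · simp only [Function.iterate_succ_apply']; exact hgap _ (hmem n)

end DirectedSet

theorem statement17_general {X : Type u} [NormedAddCommGroup X] [Lattice X] [HasSolidNorm X]
    [IsOrderedAddMonoid X] [NormedSpace ℝ X]
    [CompleteSpace X]
    (hocn : OrderContNorm X)
    (h : ∀ x : ℕ → X,
      (∀ f : X →L[ℝ] ℝ, Filter.Tendsto (fun n => f |x n|) Filter.atTop (nhds 0)) →
      (∀ u : X, 0 ≤ u → OConvTo (fun n => |x n| ⊓ u) 0) →
      Filter.Tendsto (fun n => ‖x n‖) Filter.atTop (nhds 0)) :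
    IsKB X := by
  rintro D hne hdir - ⟨M, hM⟩
  by_cases hD : ∀ ε > 0, ∃ d ∈ D, ∀ e ∈ D, d ≤ e → ‖e - d‖ < ε
  · exact exists_tendsto_of_directedOn hne hdir hD
  exfalso
  push Not at hD
  obtain ⟨ε, hε, hgap⟩ := hD
  obtain ⟨a, ha, haD, hgap⟩ := exists_monotone_le_norm_sub hne hgap
  set x := fun n => a (n + 1) - a n
  have hx : ∀ n, 0 ≤ x n := fun n => sub_nonneg.mpr (ha n.le_succ)
  have hsum : ∀ n, ‖∑ k ∈ Finset.range n, x k‖ ≤ M + M := fun n => by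
    rw [Finset.sum_range_sub]
    exact (norm_sub_le _ _).trans (add_le_add (hM _ (haD n)) (hM _ (haD 0)))
  have habs : ∀ n, |x n| = x n := fun n => abs_of_nonneg (hx n)
  have hnull := h x
    (fun f => by simpa only [habs] using tendsto_apply_zero_of_norm_sum_le hx hsum f)
    (fun u hu => by simpa only [habs] using hocn.oConvTo_inf_zero hx hsum hu)
  obtain ⟨n, hn⟩ := (hnull.eventually (gt_mem_nhds hε)).exists
  exact (hgap n).not_gt hn

/-- If in a Banach lattice with order continuous norm every sequence `x_n` with
`|x_n|` weakly null and `|x_n| ⊓ u →o 0` for all `u ≥ 0` is norm null, then `X`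
is a KB-space. -/
theorem statement17 {X : Type u} [NormedAddCommGroup X] [Lattice X] [HasSolidNorm X]
    [IsOrderedAddMonoid X] [NormedSpace ℝ X]
    [CompleteSpace X] [PosSMulMono ℝ X]
    (hocn : OrderContNorm X)
    (h : ∀ x : ℕ → X,
      (∀ f : X →L[ℝ] ℝ, Filter.Tendsto (fun n => f |x n|) Filter.atTop (nhds 0)) →
      (∀ u : X, 0 ≤ u → OConvTo (fun n => |x n| ⊓ u) 0) →
      Filter.Tendsto (fun n => ‖x n‖) Filter.atTop (nhds 0)) :
    IsKB X :=
  statement17_general hocn h
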